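/- Let t ∈ 𝕋_m, let 1 ≤ k ≤ m, and let ν_i ∈ Pr(𝕋) for i ∈ {0,…,m−1} ∖ {k−1}, with ν_i finitely supported for each i < k−1. Then the map F : Pr(𝕋) → Pr(𝕋) defined by F(ζ) = t(ν_0,…,ν_{k−2}, ζ, ν_k,…,ν_{m−1}) is continuous with respect to the weak* topology. -/

import Mathlib

open scoped Classical

/-- The free binary system (free magma) on one generator. -/
abbrev 𝕋 : Type := FreeMagma Unit

/-- The generator `1` of `𝕋`. -/
def e1 : 𝕋 := FreeMagma.of ()

/-- `#(t)`: the number of occurrences of the generator in `t`. -/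
def cnt : 𝕋 → ℕ
  | FreeMagma.of _ => 1
  | FreeMagma.mul a b => cnt a + cnt b

/-- The space `ℓ^∞(S)` of bounded real-valued functions on `S`. -/
def Bdd (S : Type*) : Type _ := {f : S → ℝ // ∃ M, ∀ s, |f s| ≤ M}

/-- Package a function as an element of `Bdd S` (junk value if unbounded). -/
noncomputable def liftBdd {S : Type*} (g : S → ℝ) : Bdd S :=
  if h : ∃ M, ∀ s, |g s| ≤ M then ⟨g, h⟩ else ⟨fun _ => 0, 0, fun _ => by simp⟩

/-- The constant function as an element of `Bdd S`. -/
def constB (S : Type*) (c : ℝ) : Bdd S := ⟨fun _ => c, |c|, fun _ => le_rfl⟩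

/-- The characteristic function of `E` as an element of `Bdd S`. -/
noncomputable def indB {S : Type*} (E : Set S) : Bdd S :=
  liftBdd (fun s => if s ∈ E then 1 else 0)

/-- `Pr S`: finitely additive probability measures on `S`, identified with the
positive normalized linear functionals on `ℓ^∞(S)`.  The weak* topology is the
subspace topology inherited from the product topology on `Bdd S → ℝ`. -/
def PrSet (S : Type*) : Set (Bdd S → ℝ) :=
  {φ | (∀ f g h : Bdd S, (∀ s, h.1 s = f.1 s + g.1 s) → φ h = φ f + φ g) ∧
       (∀ (c : ℝ) (f g : Bdd S), (∀ s, g.1 s = c * f.1 s) → φ g = c * φ f) ∧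
       (∀ f : Bdd S, (∀ s, 0 ≤ f.1 s) → 0 ≤ φ f) ∧
       φ (constB S 1) = 1}

/-- `μ(E)`: the measure of a set `E ⊆ S`. -/
noncomputable def mE {S : Type*} (φ : Bdd S → ℝ) (E : Set S) : ℝ := φ (indB E)

/-- The product `μ ⊗ ν` of finitely additive measures:
`μ⊗ν(f) = μ(x ↦ ν(y ↦ f(x,y)))`. -/
noncomputable def prodM {S T : Type*} (φ : Bdd S → ℝ) (ψ : Bdd T → ℝ) :
    Bdd (S × T) → ℝ :=
  fun f => φ (liftBdd fun x => ψ (liftBdd fun y => f.1 (x, y)))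

/-- The extension of a binary operation `op` on `S` to `Pr S`:
`μ⋆ν(f) = μ(x ↦ ν(y ↦ f(x ⋆ y)))`. -/
noncomputable def starM {S : Type*} (op : S → S → S) (φ ψ : Bdd S → ℝ) :
    Bdd S → ℝ :=
  fun f => φ (liftBdd fun x => ψ (liftBdd fun y => f.1 (op x y)))

/-- The extension of `ˆ` to `Pr 𝕋`. -/
noncomputable def hmul (φ ψ : Bdd 𝕋 → ℝ) : Bdd 𝕋 → ℝ := starM (· * ·) φ ψ

/-- Finitely supported probability measures: finite convex combinations of
point evaluations. -/
def FinSuppPr (S : Type*) : Set (Bdd S → ℝ) :=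
  {φ | ∃ (F : Finset S) (w : S → ℝ), (∀ s ∈ F, 0 ≤ w s) ∧ (∑ s ∈ F, w s) = 1 ∧
      ∀ f : Bdd S, φ f = ∑ s ∈ F, w s * f.1 s}

/-- `𝔸_n`: finitely supported probability measures concentrated on `𝕋_n`. -/
def Asets (n : ℕ) : Set (Bdd 𝕋 → ℝ) :=
  {φ | ∃ (F : Finset 𝕋) (w : 𝕋 → ℝ), (∀ t ∈ F, cnt t = n) ∧ (∀ t ∈ F, 0 ≤ w t) ∧
      (∑ t ∈ F, w t) = 1 ∧ ∀ f : Bdd 𝕋, φ f = ∑ t ∈ F, w t * f.1 t}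

/-- The extension of `+` on `ℕ` to ultrafilters: `A ∈ U+V` iff
`{m : {n : m+n ∈ A} ∈ V} ∈ U`. -/
noncomputable def addU (U V : Ultrafilter ℕ) : Ultrafilter ℕ :=
  U.bind fun m => V.map fun n => m + n

/-- `𝔸_U`: the `U`-limit of the sets `𝔸_m`. -/
def AU (U : Ultrafilter ℕ) : Set (Bdd 𝕋 → ℝ) :=
  {μ | μ ∈ PrSet 𝕋 ∧ ∀ W : Set (Bdd 𝕋 → ℝ), IsOpen W → μ ∈ W →
      {m : ℕ | (W ∩ Asets m).Nonempty} ∈ U}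

/-- The extension of `ˆ` to ultrafilters on `𝕋`: `E ∈ UˆV` iff
`{u : {v : uˆv ∈ E} ∈ V} ∈ U`. -/
noncomputable def umul (U V : Ultrafilter 𝕋) : Ultrafilter 𝕋 :=
  U.bind fun u => V.map fun v => u * v

/-- Substitution of measures into a term `t`:
`t(μ_0,…,μ_{m-1})(f)` is the nested integral
`μ_0(x_0 ↦ ⋯ μ_{m-1}(x_{m-1} ↦ f(t(x⃗)))⋯)`. -/
noncomputable def substM : 𝕋 → List (Bdd 𝕋 → ℝ) → (Bdd 𝕋 → ℝ)
  | FreeMagma.of _, μs => μs.headI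
  | FreeMagma.mul a b, μs =>
      hmul (substM a (μs.take (cnt a))) (substM b (μs.drop (cnt a)))

/-- `t_k`: iteratively remove the carets of `t` involving only leaves of index
greater than `k`. -/
def tk : 𝕋 → ℕ → 𝕋
  | FreeMagma.of _, _ => e1
  | FreeMagma.mul a b, k => if k < cnt a then tk a k * e1 else a * tk b (k - cnt a)

/-- `l_k(t) = #(t_k) - 2` (truncated subtraction). -/
def lk (t : 𝕋) (k : ℕ) : ℕ := cnt (tk t k) - 2

/-- The subterm `t/σ` of `t` at address `σ` (`false` = left/`0`, `true` = right/`1`). -/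
def subT : 𝕋 → List Bool → Option 𝕋
  | t, [] => some t
  | FreeMagma.of _, _ :: _ => none
  | FreeMagma.mul a b, c :: σ => if c then subT b σ else subT a σ

/-- `σ <_lex ς` for incompatible binary sequences: at the first coordinate where
they differ, `σ` has `0` and `ς` has `1`. -/
def lexLT (σ ς : List Bool) : Prop :=
  ∃ p σ' ς', σ = p ++ (false :: σ') ∧ ς = p ++ (true :: ς')

/-- `x₀·E`. -/
def x0E (E : Set 𝕋) : Set 𝕋 :=
  {x | ∃ a b c : 𝕋, x = a * (b * c) ∧ (a * b) * c ∈ E}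

/-- `x₁·E`. -/
def x1E (E : Set 𝕋) : Set 𝕋 :=
  {x | ∃ s a b c : 𝕋, x = s * (a * (b * c)) ∧ s * ((a * b) * c) ∈ E}

/-- `u_σ` for a nonempty finite binary sequence `σ`. -/
def uSeq : List Bool → 𝕋
  | [] => e1
  | [_] => e1
  | b :: σ => if b then e1 * uSeq σ else uSeq σ * e1

/-- `a ≪ b`: for some `p`, `#(a) < 2^p` and `2^p` divides `#(b)`. -/
def ll (a b : 𝕋) : Prop := ∃ p : ℕ, cnt a < 2 ^ p ∧ 2 ^ p ∣ cnt b

/-- `r↾n`: the first `n` values of `r` as a finite binary sequence. -/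
def rList (r : ℕ → Bool) (n : ℕ) : List Bool := (List.range n).map r

/-- The map `h_r : 𝕋 → 𝕋`. -/
noncomputable def hr (r : ℕ → Bool) : 𝕋 → 𝕋
  | FreeMagma.of _ => uSeq (rList r 1)
  | FreeMagma.mul a b =>
      if ll a b then hr r a * hr r b else uSeq (rList r (cnt a + cnt b))

/-- The action of `h_r` on measures: `h_r(μ)(f) = μ(f ∘ h_r)`. -/
noncomputable def hrM (r : ℕ → Bool) (φ : Bdd 𝕋 → ℝ) : Bdd 𝕋 → ℝ :=
  fun f => φ (liftBdd fun t => f.1 (hr r t))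

/-- `lev`: `l(1) = 0`, `l(aˆb) = l(a) + 1`. -/
def lev : 𝕋 → ℕ
  | FreeMagma.of _ => 0
  | FreeMagma.mul a _ => lev a + 1

/-- `C` is closed under `ˆ`. -/
def HClosed (C : Set (Bdd 𝕋 → ℝ)) : Prop := ∀ μ ∈ C, ∀ ν ∈ C, hmul μ ν ∈ C

/-! Induct on `t = a ˆ b`. If `ζ` occurs in `a`, then `F(ζ) = φ_ζ ˆ ψ` with `ψ` fixed, and
`φ ↦ φ ˆ ψ` is weak*-continuous on all functionals since `(φ ˆ ψ)(f) = φ(x ↦ ψ(f(x ˆ ·)))` is an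
evaluation of `φ`. If `ζ` occurs in `b`, then `F(ζ) = φ ˆ ψ_ζ` where `φ` is finitely supported,
because finitely supported measures are closed under `ˆ`; then
`(φ ˆ ψ_ζ)(f) = ∑ₛ w_s ψ_ζ(f(s ˆ ·))` is a finite combination of evaluations of `ψ_ζ`. -/

section PrSetBasics

variable {S : Type*}

theorem liftBdd_val {g : S → ℝ} (h : ∃ M, ∀ s, |g s| ≤ M) : (liftBdd g).1 = g := by
  unfold liftBdd
  exact congrArg Subtype.val (dif_pos h)

theorem liftBdd_comp_val {T : Type*} (f : Bdd S) (g : T → S) :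
    (liftBdd fun y => f.1 (g y)).1 = fun y => f.1 (g y) :=
  let ⟨M, hM⟩ := f.2
  liftBdd_val ⟨M, fun y => hM (g y)⟩

namespace PrSet

variable {φ : Bdd S → ℝ}

theorem apply_eq_const (hφ : φ ∈ PrSet S) {g : Bdd S} {c : ℝ} (hg : ∀ s, g.1 s = c) :
    φ g = c := by
  rw [hφ.2.1 c (constB S 1) g (fun s => by simp [hg, constB]), hφ.2.2.2, mul_one]

theorem apply_mono (hφ : φ ∈ PrSet S) {f g : Bdd S} (hfg : ∀ s, f.1 s ≤ g.1 s) :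
    φ f ≤ φ g := by
  obtain ⟨M, hM⟩ := f.2
  obtain ⟨N, hN⟩ := g.2
  let d : Bdd S :=
    ⟨fun s => g.1 s - f.1 s, N + M, fun s => (abs_sub _ _).trans (add_le_add (hN s) (hM s))⟩
  have hsplit : φ g = φ f + φ d := hφ.1 f d g fun s => by simp [d]
  have hd : 0 ≤ φ d := hφ.2.2.1 d fun s => sub_nonneg.2 (hfg s)
  linarith

theorem abs_apply_le (hφ : φ ∈ PrSet S) {g : Bdd S} {M : ℝ} (hg : ∀ s, |g.1 s| ≤ M) :
    |φ g| ≤ M := by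
  have hlow := apply_mono hφ (f := constB S (-M)) (g := g) fun s => neg_le_of_abs_le (hg s)
  have hupp := apply_mono hφ (f := g) (g := constB S M) fun s => le_of_abs_le (hg s)
  rw [apply_eq_const hφ (g := constB S (-M)) fun _ => rfl] at hlow
  rw [apply_eq_const hφ (g := constB S M) fun _ => rfl] at hupp
  exact abs_le.2 ⟨hlow, hupp⟩

end PrSet

theorem finSuppPr_subset_prSet : FinSuppPr S ⊆ PrSet S := by
  rintro φ ⟨F, w, hw0, hw1, hev⟩
  refine ⟨fun f g h hfgh => ?_, fun c f g hfg => ?_, fun f hf => ?_, ?_⟩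
  · simp only [hev, hfgh, mul_add, Finset.sum_add_distrib]
  · simp only [hev, hfg, Finset.mul_sum]
    exact Finset.sum_congr rfl fun _ _ => by ring
  · rw [hev]
    exact Finset.sum_nonneg fun s hs => mul_nonneg (hw0 s hs) (hf s)
  · rw [hev]
    simp [constB, hw1]

end PrSetBasics

section StarM

variable {S : Type*} (op : S → S → S) {φ ψ : Bdd S → ℝ}

theorem liftBdd_starM_val (hψ : ψ ∈ PrSet S) (f : Bdd S) :
    (liftBdd fun x => ψ (liftBdd fun y => f.1 (op x y))).1 =
      fun x => ψ (liftBdd fun y => f.1 (op x y)) :=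
  let ⟨M, hM⟩ := f.2
  liftBdd_val ⟨M, fun x => PrSet.abs_apply_le hψ fun y => by rw [liftBdd_comp_val]; exact hM _⟩

theorem starM_mem_prSet (hφ : φ ∈ PrSet S) (hψ : ψ ∈ PrSet S) : starM op φ ψ ∈ PrSet S := by
  refine ⟨fun f g h hfgh => ?_, fun c f g hfg => ?_, fun f hf => ?_, ?_⟩
  · refine hφ.1 _ _ _ fun x => ?_
    simp only [liftBdd_starM_val op hψ]
    exact hψ.1 _ _ _ fun y => by simp only [liftBdd_comp_val]; exact hfgh _
  · refine hφ.2.1 c _ _ fun x => ?_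
    simp only [liftBdd_starM_val op hψ]
    exact hψ.2.1 c _ _ fun y => by simp only [liftBdd_comp_val]; exact hfg _
  · refine hφ.2.2.1 _ fun x => ?_
    simp only [liftBdd_starM_val op hψ]
    exact hψ.2.2.1 _ fun y => by simp only [liftBdd_comp_val]; exact hf _
  · refine PrSet.apply_eq_const hφ fun x => ?_
    simp only [liftBdd_starM_val op hψ]
    exact PrSet.apply_eq_const hψ fun y => by simp only [liftBdd_comp_val]; rfl

theorem starM_eq_sum {F : Finset S} {w : S → ℝ} (hφF : ∀ f : Bdd S, φ f = ∑ s ∈ F, w s * f.1 s)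
    (hψ : ψ ∈ PrSet S) (f : Bdd S) :
    starM op φ ψ f = ∑ s ∈ F, w s * ψ (liftBdd fun y => f.1 (op s y)) := by
  rw [starM, hφF, liftBdd_starM_val op hψ]

theorem mem_finSuppPr_of_eq_sum {α : Type*} (P : Finset α) (w : α → ℝ) (g : α → S)
    (hw0 : ∀ p ∈ P, 0 ≤ w p) (hw1 : ∑ p ∈ P, w p = 1)
    (hφP : ∀ f : Bdd S, φ f = ∑ p ∈ P, w p * f.1 (g p)) : φ ∈ FinSuppPr S := by
  have hmaps : ∀ p ∈ P, g p ∈ P.image g := fun p hp => Finset.mem_image_of_mem g hp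
  refine ⟨P.image g, fun s => ∑ p ∈ P with g p = s, w p,
    fun s _ => Finset.sum_nonneg fun p hp => hw0 p (Finset.mem_filter.1 hp).1, ?_, fun f => ?_⟩
  · rw [Finset.sum_fiberwise_of_maps_to hmaps, hw1]
  · rw [hφP, ← Finset.sum_fiberwise_of_maps_to hmaps]
    refine Finset.sum_congr rfl fun s _ => ?_
    rw [Finset.sum_mul]
    exact Finset.sum_congr rfl fun p hp => by rw [(Finset.mem_filter.1 hp).2]

theorem starM_mem_finSuppPr (hφ : φ ∈ FinSuppPr S) (hψ : ψ ∈ FinSuppPr S) :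
    starM op φ ψ ∈ FinSuppPr S := by
  obtain ⟨F, w, hw0, hw1, hφF⟩ := hφ
  obtain ⟨G, v, hv0, hv1, hψG⟩ := hψ
  refine mem_finSuppPr_of_eq_sum (F ×ˢ G) (fun p => w p.1 * v p.2) (fun p => op p.1 p.2)
    (fun p hp => mul_nonneg (hw0 _ (Finset.mem_product.1 hp).1) (hv0 _ (Finset.mem_product.1 hp).2))
    ?_ fun f => ?_
  · simp [Finset.sum_product, ← Finset.mul_sum, hv1, hw1]
  · rw [starM_eq_sum op hφF (finSuppPr_subset_prSet ⟨G, v, hv0, hv1, hψG⟩), Finset.sum_product]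
    refine Finset.sum_congr rfl fun s _ => ?_
    rw [hψG, liftBdd_comp_val, Finset.mul_sum]
    exact Finset.sum_congr rfl fun t _ => mul_assoc _ _ _ |>.symm

theorem continuous_starM_left (ψ : Bdd S → ℝ) : Continuous fun φ : Bdd S → ℝ => starM op φ ψ :=
  continuous_pi fun _ => continuous_apply _

theorem continuousOn_starM_right (hφ : φ ∈ FinSuppPr S) :
    ContinuousOn (fun ψ => starM op φ ψ) (PrSet S) := by
  obtain ⟨F, w, -, -, hφF⟩ := hφ
  refine continuousOn_pi.2 fun f => ?_
  refine ContinuousOn.congr (f := fun ψ => ∑ s ∈ F, w s * ψ (liftBdd fun y => f.1 (op s y)))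
    ?_ fun ψ hψ => starM_eq_sum op hφF hψ f
  exact (continuous_finsetSum F fun s _ => continuous_const.mul
    (continuous_apply (liftBdd fun y => f.1 (op s y)))).continuousOn

end StarM

theorem hClosed_prSet : HClosed (PrSet 𝕋) :=
  fun _ hφ _ hψ => starM_mem_prSet _ hφ hψ

theorem hClosed_finSuppPr : HClosed (FinSuppPr 𝕋) :=
  fun _ hφ _ hψ => starM_mem_finSuppPr _ hφ hψ

theorem substM_of_range (u : Unit) (μ : ℕ → Bdd 𝕋 → ℝ) :
    substM (FreeMagma.of u) ((List.range (cnt (FreeMagma.of u))).map μ) = μ 0 := rfl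

theorem substM_mul_range (a b : 𝕋) (μ : ℕ → Bdd 𝕋 → ℝ) :
    substM (FreeMagma.mul a b) ((List.range (cnt (FreeMagma.mul a b))).map μ) =
      hmul (substM a ((List.range (cnt a)).map μ))
        (substM b ((List.range (cnt b)).map fun j => μ (cnt a + j))) := by
  simp only [cnt, substM, List.range_add, List.map_append, List.map_map, Function.comp_def]
  rw [List.take_left' (by simp), List.drop_left' (by simp)]

theorem substM_mem_of_hClosed {C : Set (Bdd 𝕋 → ℝ)} (hC : HClosed C) (t : 𝕋)
    {μ : ℕ → Bdd 𝕋 → ℝ} (hμ : ∀ i < cnt t, μ i ∈ C) :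
    substM t ((List.range (cnt t)).map μ) ∈ C := by
  induction t generalizing μ with
  | of u => exact hμ 0 Nat.one_pos
  | mul a b iha ihb =>
    rw [substM_mul_range]
    exact hC _ (iha fun i hi => hμ i (by simp only [cnt]; omega)) _
      (ihb fun j hj => hμ _ (by simp only [cnt]; omega))

theorem continuousOn_substM_update (t : 𝕋) (k : ℕ) {ν : ℕ → Bdd 𝕋 → ℝ}
    (hν : ∀ i < cnt t, i ≠ k → ν i ∈ PrSet 𝕋) (hfs : ∀ i < k, ν i ∈ FinSuppPr 𝕋) :
    ContinuousOn (fun ζ => substM t ((List.range (cnt t)).map (Function.update ν k ζ)))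
      (PrSet 𝕋) := by
  induction t generalizing k ν with
  | of u =>
    simp only [substM_of_range]
    rcases eq_or_ne k 0 with rfl | hk
    · simp only [Function.update_self]
      exact continuousOn_id
    · simp only [Function.update_of_ne hk.symm]
      exact continuousOn_const
  | mul a b iha ihb =>
    simp only [substM_mul_range]
    rcases lt_or_ge k (cnt a) with hka | hak
    · have hright : ∀ ζ, (fun j => Function.update ν k ζ (cnt a + j)) = fun j => ν (cnt a + j) :=
        fun ζ => funext fun j => Function.update_of_ne (by omega) _ _
      simp only [hright]
      exact (continuous_starM_left _ _).comp_continuousOn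
        (iha k (fun i hi => hν i (by simp only [cnt]; omega)) hfs)
    · obtain ⟨k, rfl⟩ := Nat.exists_eq_add_of_le hak
      have hleft : ∀ ζ, (List.range (cnt a)).map (Function.update ν (cnt a + k) ζ) =
          (List.range (cnt a)).map ν :=
        fun ζ => List.map_congr_left fun i hi => Function.update_of_ne (by simp at hi; omega) _ _
      simp only [hleft, Function.update_comp_eq_of_injective' ν (add_right_injective (cnt a))]
      have hν' : ∀ j < cnt b, j ≠ k → ν (cnt a + j) ∈ PrSet 𝕋 :=
        fun j hj hjk => hν _ (by simp only [cnt]; omega) (by omega)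
      refine (continuousOn_starM_right _ ?_).comp (ihb k hν' fun j hj => hfs _ (by omega))
        fun ζ hζ => ?_
      · exact substM_mem_of_hClosed hClosed_finSuppPr a fun i hi => hfs i (by omega)
      · refine substM_mem_of_hClosed hClosed_prSet b fun j hj => ?_
        rcases eq_or_ne j k with rfl | hjk
        · simpa only [Function.update_self] using hζ
        · simpa only [Function.update_of_ne hjk] using hν' j hj hjk

theorem subst_continuous_general (m : ℕ) (t : 𝕋) (ht : cnt t = m) (k : ℕ)
    (ν : ℕ → (Bdd 𝕋 → ℝ))
    (hν : ∀ i < m, i ≠ k - 1 → ν i ∈ PrSet 𝕋)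
    (hfs : ∀ i < k - 1, ν i ∈ FinSuppPr 𝕋) :
    ContinuousOn
      (fun ζ : Bdd 𝕋 → ℝ =>
        substM t ((List.range m).map fun i => if i = k - 1 then ζ else ν i))
      (PrSet 𝕋) := by
  subst ht
  simpa only [← Function.update_apply] using continuousOn_substM_update t (k - 1) hν hfs

/-- Claim 4.2: substitution into `t` is weak*-continuous in the
`(k-1)`-st coordinate, provided the earlier coordinates are finitely supported. -/
theorem subst_continuous (m : ℕ) (t : 𝕋) (ht : cnt t = m) (k : ℕ)
    (hk1 : 1 ≤ k) (hkm : k ≤ m) (ν : ℕ → (Bdd 𝕋 → ℝ))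
    (hν : ∀ i < m, i ≠ k - 1 → ν i ∈ PrSet 𝕋)
    (hfs : ∀ i < k - 1, ν i ∈ FinSuppPr 𝕋) :
    ContinuousOn
      (fun ζ : Bdd 𝕋 → ℝ =>
        substM t ((List.range m).map fun i => if i = k - 1 then ζ else ν i))
      (PrSet 𝕋) :=
  subst_continuous_general m t ht k ν hν hfs
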